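/- Assume the ideal J is prime and the image of X₁ − X₂ in A = ℂ[X₁,Y₁,X₂,Y₂]/J is nonzero. The ring automorphism of ℂ[X₁,Y₁,X₂,Y₂] swapping X₁ ↔ X₂ and Y₁ ↔ Y₂ preserves J and hence induces an involutive field automorphism τ of Frac(A). Then the fixed field {g ∈ Frac(A) : τ(g) = g} equals the smallest subfield of Frac(A) containing all constants (the image of ℂ) together with the four elements ū₂, ū₄, ū₅, ū₇. -/

import Mathlib

/- Context: Q(X) = X⁷ + y₄X⁵ − y₆X⁴ + y₈X³ − y₁₀X² + y₁₂X − y₁₄; J is the ideal of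
ℂ[X₁,Y₁,X₂,Y₂] (variables 0 ↦ X₁, 1 ↦ Y₁, 2 ↦ X₂, 3 ↦ Y₂) generated by Y₁² − Q(X₁)
and Y₂² − Q(X₂); A = ℂ[X₁,Y₁,X₂,Y₂]/J.  The swap automorphism exchanges
X₁ ↔ X₂ and Y₁ ↔ Y₂; it preserves J and hence induces an involutive field
automorphism τ of Frac(A), characterized by its compatibility with the swap on
representatives. -/

open MvPolynomial

set_option synthInstance.maxHeartbeats 1000000
set_option maxHeartbeats 1000000

noncomputable section

/-- `Q(Xᵢ)` as a polynomial in `ℂ[X₁,Y₁,X₂,Y₂]`. -/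
def Qp (y4 y6 y8 y10 y12 y14 : ℂ) (i : Fin 4) : MvPolynomial (Fin 4) ℂ :=
  X i ^ 7 + C y4 * X i ^ 5 - C y6 * X i ^ 4 + C y8 * X i ^ 3
    - C y10 * X i ^ 2 + C y12 * X i - C y14

/-- The ideal `J = (Y₁² − Q(X₁), Y₂² − Q(X₂))`. -/
def Jideal (y4 y6 y8 y10 y12 y14 : ℂ) : Ideal (MvPolynomial (Fin 4) ℂ) :=
  Ideal.span {X 1 ^ 2 - Qp y4 y6 y8 y10 y12 y14 0, X 3 ^ 2 - Qp y4 y6 y8 y10 y12 y14 2}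

/-- The map on variables induced by swapping X₁ ↔ X₂ and Y₁ ↔ Y₂. -/
def swapFun : Fin 4 → Fin 4 := ![2, 3, 0, 1]

/-! The swap τ negates `δ = x₁ - x₂` and fixes the field `K` generated by the constants and
`ū₂, ū₄, ū₅, ū₇`. Since `δ² = 4ū₄ ∈ K`, the elements `a + bδ` with `a, b ∈ K` form a subfield;
it contains `x₁ = ū₂ + δ/2`, `x₂ = ū₂ - δ/2`, `y₁ = ū₇ + ū₅δ/2`, `y₂ = ū₇ - ū₅δ/2`, hence is all of
`Frac(A)`. Finally `τ (a + bδ) = a - bδ`, so `a + bδ` is fixed exactly when `b = 0`. -/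

section AdjoinSqrt

variable {F : Type*} [Field F] (K : Subfield F) {δ : F}

def Subfield.adjoinSqrt (hδ : δ ^ 2 ∈ K) : Subfield F where
  carrier := {z | ∃ a ∈ K, ∃ b ∈ K, z = a + b * δ}
  zero_mem' := ⟨0, K.zero_mem, 0, K.zero_mem, by ring⟩
  one_mem' := ⟨1, K.one_mem, 0, K.zero_mem, by ring⟩
  add_mem' := by
    rintro _ _ ⟨a, ha, b, hb, rfl⟩ ⟨c, hc, d, hd, rfl⟩
    exact ⟨a + c, K.add_mem ha hc, b + d, K.add_mem hb hd, by ring⟩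
  neg_mem' := by
    rintro _ ⟨a, ha, b, hb, rfl⟩
    exact ⟨-a, K.neg_mem ha, -b, K.neg_mem hb, by ring⟩
  mul_mem' := by
    rintro _ _ ⟨a, ha, b, hb, rfl⟩ ⟨c, hc, d, hd, rfl⟩
    exact ⟨a * c + b * d * δ ^ 2, K.add_mem (K.mul_mem ha hc) (K.mul_mem (K.mul_mem hb hd) hδ),
      a * d + b * c, K.add_mem (K.mul_mem ha hd) (K.mul_mem hb hc), by ring⟩
  inv_mem' := by
    rintro _ ⟨a, ha, b, hb, rfl⟩
    by_cases hδK : δ ∈ K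
    · exact ⟨(a + b * δ)⁻¹, K.inv_mem (K.add_mem ha (K.mul_mem hb hδK)), 0, K.zero_mem, by ring⟩
    by_cases hz : a + b * δ = 0
    · exact ⟨0, K.zero_mem, 0, K.zero_mem, by simp [hz]⟩
    have hconj : a - b * δ ≠ 0 := by
      intro h
      rcases eq_or_ne b 0 with rfl | hb0
      · exact hz (by simpa using h)
      · rw [show δ = a / b by field_simp; linear_combination -h] at hδK
        exact hδK (K.div_mem ha hb)
    have hN : a ^ 2 - b ^ 2 * δ ^ 2 = (a + b * δ) * (a - b * δ) := by ring
    have hNK : a ^ 2 - b ^ 2 * δ ^ 2 ∈ K :=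
      K.sub_mem (K.pow_mem ha 2) (K.mul_mem (K.pow_mem hb 2) hδ)
    refine ⟨a / (a ^ 2 - b ^ 2 * δ ^ 2), K.div_mem ha hNK,
      -b / (a ^ 2 - b ^ 2 * δ ^ 2), K.div_mem (K.neg_mem hb) hNK, ?_⟩
    rw [hN]
    field_simp
    ring

theorem Subfield.le_adjoinSqrt (hδ : δ ^ 2 ∈ K) : K ≤ K.adjoinSqrt hδ :=
  fun a ha => ⟨a, ha, 0, K.zero_mem, by ring⟩

theorem Subfield.setOf_map_eq_self_eq_of_adjoinSqrt_eq_top {G : Type*} [FunLike G F F]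
    [RingHomClass G F F] {τ : G}
    (hτK : ∀ a ∈ K, τ a = a) (hτδ : τ δ = -δ) (hδ0 : δ ≠ 0) (h2 : (2 : F) ≠ 0) (hδ : δ ^ 2 ∈ K)
    (htop : K.adjoinSqrt hδ = ⊤) : {z | τ z = z} = K := by
  ext z
  refine ⟨fun hz => ?_, hτK z⟩
  obtain ⟨a, ha, b, hb, rfl⟩ : z ∈ K.adjoinSqrt hδ := htop ▸ Subfield.mem_top z
  have hz : τ (a + b * δ) = a + b * δ := hz
  have hconj : τ (a + b * δ) = a - b * δ := by
    rw [map_add, map_mul, hτK a ha, hτK b hb, hτδ]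
    ring
  have hb0 : b = 0 := by
    have : 2 * b * δ = 0 := by linear_combination hconj - hz
    simpa [h2, hδ0] using this
  simpa [hb0] using ha

end AdjoinSqrt

section SymmetricGenerators

variable {F : Type*} [Field F] (x₁ y₁ x₂ y₂ : F)

def symmetricGenerators : Set F :=
  {(x₁ + x₂) / 2, (x₁ - x₂) ^ 2 / 4, (y₁ - y₂) / (x₁ - x₂), (y₁ + y₂) / 2}

variable {x₁ y₁ x₂ y₂}

theorem map_eq_self_of_mem_symmetricGenerators {G : Type*} [FunLike G F F] [RingHomClass G F F]
    {τ : G} (hx₁ : τ x₁ = x₂) (hx₂ : τ x₂ = x₁) (hy₁ : τ y₁ = y₂) (hy₂ : τ y₂ = y₁) :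
    ∀ u ∈ symmetricGenerators x₁ y₁ x₂ y₂, τ u = u := by
  rintro u (rfl | rfl | rfl | rfl)
  · rw [map_div₀, map_add, hx₁, hx₂, map_ofNat, add_comm]
  · rw [map_div₀, map_pow, map_sub, hx₁, hx₂, map_ofNat, ← neg_sub, neg_sq]
  · rw [map_div₀, map_sub, map_sub, hx₁, hx₂, hy₁, hy₂, ← neg_sub x₁, ← neg_sub y₁, neg_div_neg_eq]
  · rw [map_div₀, map_add, hy₁, hy₂, map_ofNat, add_comm]

variable {K : Subfield F}

theorem sub_sq_mem_of_symmetricGenerators_subset (hK : symmetricGenerators x₁ y₁ x₂ y₂ ⊆ K)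
    (h2 : (2 : F) ≠ 0) : (x₁ - x₂) ^ 2 ∈ K := by
  have h4 : (4 : F) ≠ 0 := by simpa [show (4 : F) = 2 * 2 by norm_num] using h2
  rw [show (x₁ - x₂) ^ 2 = 4 * ((x₁ - x₂) ^ 2 / 4) by field_simp]
  exact K.mul_mem (ofNat_mem K 4) (hK (by simp [symmetricGenerators]))

theorem subset_adjoinSqrt_of_symmetricGenerators_subset (hK : symmetricGenerators x₁ y₁ x₂ y₂ ⊆ K)
    (h2 : (2 : F) ≠ 0) (hx : x₁ ≠ x₂) :
    {x₁, y₁, x₂, y₂} ⊆ (K.adjoinSqrt (sub_sq_mem_of_symmetricGenerators_subset hK h2) : Set F) := by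
  have hu : ∀ u ∈ symmetricGenerators x₁ y₁ x₂ y₂, u ∈ K := hK
  simp only [symmetricGenerators, Set.mem_insert_iff, Set.mem_singleton_iff, forall_eq_or_imp,
    forall_eq] at hu
  obtain ⟨hu₂, -, hu₅, hu₇⟩ := hu
  have hhalf : (2 : F)⁻¹ ∈ K := K.inv_mem (ofNat_mem K 2)
  have hδ : x₁ - x₂ ≠ 0 := sub_ne_zero.mpr hx
  rintro z (rfl | rfl | rfl | rfl)
  · exact ⟨_, hu₂, _, hhalf, by field_simp; ring⟩
  · exact ⟨_, hu₇, _, K.mul_mem hu₅ hhalf, by field_simp; ring⟩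
  · exact ⟨_, hu₂, _, K.neg_mem hhalf, by field_simp; ring⟩
  · exact ⟨_, hu₇, _, K.neg_mem (K.mul_mem hu₅ hhalf), by field_simp; ring⟩

end SymmetricGenerators

theorem Subfield.eq_top_of_mk_C_mem_of_mk_X_mem {σ R : Type*} [CommRing R]
    {I : Ideal (MvPolynomial σ R)} [I.IsPrime] (T : Subfield (FractionRing (MvPolynomial σ R ⧸ I)))
    (hC : ∀ c, algebraMap _ _ (Ideal.Quotient.mk I (C c)) ∈ T)
    (hX : ∀ i, algebraMap _ _ (Ideal.Quotient.mk I (X i)) ∈ T) : T = ⊤ := by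
  rw [eq_top_iff, ← IsFractionRing.closure_range_algebraMap (MvPolynomial σ R ⧸ I),
    Subfield.closure_le]
  rintro _ ⟨a, rfl⟩
  obtain ⟨p, rfl⟩ := Ideal.Quotient.mk_surjective a
  induction p using MvPolynomial.induction_on with
  | C c => exact hC c
  | add p q hp hq =>
    rw [map_add, map_add]
    exact T.add_mem hp hq
  | mul_X p i hp =>
    rw [map_mul, map_mul]
    exact T.mul_mem hp (hX i)

theorem statement6_general (y4 y6 y8 y10 y12 y14 : ℂ)
    (hJ : (Jideal y4 y6 y8 y10 y12 y14).IsPrime)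
    (hx : Ideal.Quotient.mk (Jideal y4 y6 y8 y10 y12 y14) (X 0 - X 2) ≠ 0) :
    haveI := hJ
    let ι : MvPolynomial (Fin 4) ℂ →
        FractionRing (MvPolynomial (Fin 4) ℂ ⧸ Jideal y4 y6 y8 y10 y12 y14) :=
      fun f => algebraMap (MvPolynomial (Fin 4) ℂ ⧸ Jideal y4 y6 y8 y10 y12 y14)
        (FractionRing (MvPolynomial (Fin 4) ℂ ⧸ Jideal y4 y6 y8 y10 y12 y14))
        (Ideal.Quotient.mk (Jideal y4 y6 y8 y10 y12 y14) f)
    let u2 := (ι (X 0) + ι (X 2)) / 2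
    let u4 := (ι (X 0) - ι (X 2)) ^ 2 / 4
    let u5 := (ι (X 1) - ι (X 3)) / (ι (X 0) - ι (X 2))
    let u7 := (ι (X 1) + ι (X 3)) / 2
    ∀ τ : FractionRing (MvPolynomial (Fin 4) ℂ ⧸ Jideal y4 y6 y8 y10 y12 y14) ≃+*
        FractionRing (MvPolynomial (Fin 4) ℂ ⧸ Jideal y4 y6 y8 y10 y12 y14),
      (∀ f : MvPolynomial (Fin 4) ℂ, τ (ι f) = ι (rename swapFun f)) →
      Function.Involutive τ →
      {g | τ g = g} =
        (Subfield.closure ((Set.range fun c : ℂ => ι (C c)) ∪ {u2, u4, u5, u7}) :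
          Set (FractionRing (MvPolynomial (Fin 4) ℂ ⧸ Jideal y4 y6 y8 y10 y12 y14))) := by
  intro ι u2 u4 u5 u7 τ hτ _
  set K := Subfield.closure ((Set.range fun c : ℂ => ι (C c)) ∪ {u2, u4, u5, u7})
  have hτX (i : Fin 4) : τ (ι (X i)) = ι (X (swapFun i)) := by rw [hτ, rename_X]
  have hKfix : ∀ g ∈ K, τ g = g := fun g hg =>
    (τ : _ →+* _).eqOn_field_closure (g := RingHom.id _) (by
      rintro _ (⟨c, rfl⟩ | hu)
      · show τ (ι (C c)) = ι (C c)
        rw [hτ, rename_C]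
      · exact map_eq_self_of_mem_symmetricGenerators (hτX 0) (hτX 2) (hτX 1) (hτX 3) _ hu) hg
  have h2 : (2 : FractionRing (MvPolynomial (Fin 4) ℂ ⧸ Jideal y4 y6 y8 y10 y12 y14)) ≠ 0 := by
    simpa only [map_ofNat] using (map_ne_zero (algebraMap ℂ _)).2 (two_ne_zero (α := ℂ))
  have hx' : ι (X 0) ≠ ι (X 2) := fun h => hx <| by
    apply IsFractionRing.injective (MvPolynomial (Fin 4) ℂ ⧸ Jideal y4 y6 y8 y10 y12 y14)
      (FractionRing (MvPolynomial (Fin 4) ℂ ⧸ Jideal y4 y6 y8 y10 y12 y14))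
    simpa [ι, sub_eq_zero] using h
  have hgen : symmetricGenerators (ι (X 0)) (ι (X 1)) (ι (X 2)) (ι (X 3)) ⊆ K :=
    Set.subset_union_right.trans Subfield.subset_closure
  refine K.setOf_map_eq_self_eq_of_adjoinSqrt_eq_top hKfix
    (by rw [map_sub, hτX, hτX]; exact (neg_sub _ _).symm) (sub_ne_zero.mpr hx') h2
    (sub_sq_mem_of_symmetricGenerators_subset hgen h2) ?_
  apply Subfield.eq_top_of_mk_C_mem_of_mk_X_mem
  · exact fun c => K.le_adjoinSqrt _ (Subfield.subset_closure (Or.inl ⟨c, rfl⟩))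
  · intro i
    fin_cases i <;>
      exact subset_adjoinSqrt_of_symmetricGenerators_subset hgen h2 hx' (by simp [ι])

/-- Assume `J` is prime and `x₁ − x₂ ≠ 0` in `A`.  The swap automorphism preserves `J`
and induces an involutive field automorphism `τ` of `Frac(A)`.  Then the fixed field
`{g : τ(g) = g}` is the smallest subfield of `Frac(A)` containing the constants
(the image of ℂ) together with `ū₂, ū₄, ū₅, ū₇`. -/
theorem statement6 (y4 y6 y8 y10 y12 y14 : ℂ)
    (hJ : (Jideal y4 y6 y8 y10 y12 y14).IsPrime)
    (hx : Ideal.Quotient.mk (Jideal y4 y6 y8 y10 y12 y14) (X 0 - X 2) ≠ 0)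
    (hswap : ∀ f ∈ Jideal y4 y6 y8 y10 y12 y14,
      rename swapFun f ∈ Jideal y4 y6 y8 y10 y12 y14) :
    haveI := hJ
    let ι : MvPolynomial (Fin 4) ℂ →
        FractionRing (MvPolynomial (Fin 4) ℂ ⧸ Jideal y4 y6 y8 y10 y12 y14) :=
      fun f => algebraMap (MvPolynomial (Fin 4) ℂ ⧸ Jideal y4 y6 y8 y10 y12 y14)
        (FractionRing (MvPolynomial (Fin 4) ℂ ⧸ Jideal y4 y6 y8 y10 y12 y14))
        (Ideal.Quotient.mk (Jideal y4 y6 y8 y10 y12 y14) f)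
    let u2 := (ι (X 0) + ι (X 2)) / 2
    let u4 := (ι (X 0) - ι (X 2)) ^ 2 / 4
    let u5 := (ι (X 1) - ι (X 3)) / (ι (X 0) - ι (X 2))
    let u7 := (ι (X 1) + ι (X 3)) / 2
    ∀ τ : FractionRing (MvPolynomial (Fin 4) ℂ ⧸ Jideal y4 y6 y8 y10 y12 y14) ≃+*
        FractionRing (MvPolynomial (Fin 4) ℂ ⧸ Jideal y4 y6 y8 y10 y12 y14),
      (∀ f : MvPolynomial (Fin 4) ℂ, τ (ι f) = ι (rename swapFun f)) →
      Function.Involutive τ →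
      {g | τ g = g} =
        (Subfield.closure ((Set.range fun c : ℂ => ι (C c)) ∪ {u2, u4, u5, u7}) :
          Set (FractionRing (MvPolynomial (Fin 4) ℂ ⧸ Jideal y4 y6 y8 y10 y12 y14))) :=
  statement6_general y4 y6 y8 y10 y12 y14 hJ hx

end
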